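/- arXiv:2202.10616 — 7 statements merged into one kernel-verified Lean document; each statement's English description precedes it below -/
import Mathlib

section
/- Let g be an isometry of the lattice (Z^{n+1}, Q) of signature (1,n) (n = 7 or 8) that fixes K = -3H + E_1 + ... + E_n and acts by negation on the orthogonal complement of K. Then there is no c in the lattice with Q(c,c) = -1 and g(c) = c, no c with Q(c,c) = -1 and g(c) = -c, and no pair c1, c2 with Q(c_i,c_j) = -δ_{ij} and g(c1) = c2. -/
/-- Let `n = 7` or `8` and let `g` be an isometry of `(ℤ^{n+1}, Q)` of signature
`(1,n)` fixing `K = -3H + E₁ + ⋯ + Eₙ` and acting by negation on `K^⊥` (the homological action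
of the Geiser resp. Bertini involution). Then there is no `c` with `Q(c,c) = -1` and `g(c) = c`,
none with `Q(c,c) = -1` and `g(c) = -c`, and no pair `c₁, c₂` with `Q(cᵢ,cⱼ) = -δᵢⱼ` and
`g(c₁) = c₂`. -/
theorem stmt_5 (n : ℕ) (hn : n = 7 ∨ n = 8)
    (Q : (Fin (n+1) → ℤ) → (Fin (n+1) → ℤ) → ℤ)
    (hQ : ∀ x y, Q x y = ∑ i : Fin (n+1), (if (i : ℕ) = 0 then 1 else -1) * x i * y i)
    (K : Fin (n+1) → ℤ)
    (hK : K = fun i : Fin (n+1) => if (i : ℕ) = 0 then -3 else 1)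
    (g : (Fin (n+1) → ℤ) ≃ₗ[ℤ] (Fin (n+1) → ℤ))
    (hgQ : ∀ x y, Q (g x) (g y) = Q x y)
    (hgK : g K = K)
    (hgneg : ∀ x, Q x K = 0 → g x = -x) :
    (¬ ∃ c, Q c c = -1 ∧ g c = c) ∧
    (¬ ∃ c, Q c c = -1 ∧ g c = -c) ∧
    (¬ ∃ c₁ c₂ : Fin (n+1) → ℤ,
        Q c₁ c₁ = -1 ∧ Q c₂ c₂ = -1 ∧ Q c₁ c₂ = 0 ∧ g c₁ = c₂) := by
  -- basic bilinearity facts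
  have hsymm : ∀ x y, Q x y = Q y x := by
    intro x y; rw [hQ, hQ]; apply Finset.sum_congr rfl; intro i _; ring
  have hsub : ∀ x y z, Q (x - y) z = Q x z - Q y z := by
    intro x y z
    rw [hQ, hQ, hQ, ← Finset.sum_sub_distrib]
    apply Finset.sum_congr rfl; intro i _
    simp only [Pi.sub_apply]; ring
  have hsmul : ∀ (a : ℤ) x y, Q (a • x) y = a * Q x y := by
    intro a x y
    rw [hQ, hQ, Finset.mul_sum]
    apply Finset.sum_congr rfl; intro i _
    simp only [Pi.smul_apply, smul_eq_mul]; ring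
  -- the value d = Q K K
  set d := Q K K with hd
  have hdval : d = 2 ∨ d = 1 := by
    rcases hn with h | h
    · left
      subst h
      rw [hd, hQ, hK]
      norm_num [Fin.sum_univ_succ]
    · right
      subst h
      rw [hd, hQ, hK]
      norm_num [Fin.sum_univ_succ]
  have hdpos : 0 < d := by rcases hdval with h | h <;> omega
  -- the key identity
  have key : ∀ x, d • g x = (2 * Q x K) • K - d • x := by
    intro x
    have hy : Q (d • x - (Q x K) • K) K = 0 := by
      rw [hsub, hsmul, hsmul, ← hd]; ring
    have h1 := hgneg _ hy
    rw [map_sub, map_smul, map_smul, hgK] at h1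
    funext i
    have h2 := congrFun h1 i
    simp only [Pi.sub_apply, Pi.smul_apply, Pi.neg_apply, smul_eq_mul] at h2 ⊢
    linarith
  -- parity lemma : Q c c ≡ Q c K (mod 2)
  have hpar : ∀ c, Even (Q c c - Q c K) := by
    intro c
    rw [hQ, hQ, hK, ← Finset.sum_sub_distrib]
    apply Finset.even_sum
    intro i _
    by_cases h : (i : ℕ) = 0
    · simp only [h, if_true]
      rcases Int.even_or_odd (c i) with ⟨k, hk⟩ | ⟨k, hk⟩
      · exact ⟨2*k*k + 3*k, by rw [hk]; ring⟩
      · exact ⟨2*k*k + 5*k + 2, by rw [hk]; ring⟩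
    · simp only [h, if_false]
      rcases Int.even_or_odd (c i) with ⟨k, hk⟩ | ⟨k, hk⟩
      · exact ⟨-(2*k*k) + k, by rw [hk]; ring⟩
      · exact ⟨-(2*k*k) - k, by rw [hk]; ring⟩
  refine ⟨?_, ?_, ?_⟩
  · rintro ⟨c, hc, hgc⟩
    have h1 := key c
    rw [hgc] at h1
    -- d • c = (2 * Q c K) • K - d • c, so 2*d • c = 2 (Q c K) • K, so d • c = Q c K • K
    have h2 : d • c = (Q c K) • K := by
      funext i
      have := congrFun h1 i
      simp only [Pi.sub_apply, Pi.smul_apply, smul_eq_mul] at this ⊢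
      linarith
    have h3 := congrArg (fun v => Q v c) h2
    simp only [hsmul] at h3
    rw [hc, hsymm K c] at h3
    -- h3 : d * -1 = Q c K * Q c K
    nlinarith [sq_nonneg (Q c K)]
  · rintro ⟨c, hc, hgc⟩
    have h1 := key c
    rw [hgc] at h1
    -- d • (-c) = (2 * Q c K) • K - d • c hence (2 * Q c K) • K = 0
    have h2 : Q c K = 0 := by
      have h3 := congrFun h1 ⟨0, Nat.succ_pos n⟩
      have hK0 : K ⟨0, Nat.succ_pos n⟩ = -3 := by rw [hK]; rfl
      simp only [Pi.sub_apply, Pi.smul_apply, Pi.neg_apply, smul_eq_mul, hK0] at h3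
      linarith
    have := hpar c
    rw [hc, h2] at this
    norm_num at this
  · rintro ⟨c₁, c₂, hc1, hc2, h12, hgc⟩
    have h1 := key c₁
    rw [hgc] at h1
    have h3 := congrArg (fun v => Q v c₁) h1
    simp only [hsub, hsmul] at h3
    rw [hsymm c₂ c₁, h12, hsymm K c₁, hc1] at h3
    -- h3 : d * 0 = 2 * Q c₁ K * Q c₁ K - d * -1
    nlinarith [sq_nonneg (Q c₁ K)]
end

section
/- Let g be the isometry of the lattice (Z^8, Q) of signature (1,7) given as the product of the reflections about the three pairwise-orthogonal roots H-E_1-E_2-E_7, H-E_3-E_4-E_7, H-E_5-E_6-E_7. Then g fixes both α_1 = 2H-E_1-E_3-E_5-E_7 and α_2 = H-E_7, and Q(α_1,α_1) = 0, Q(α_2,α_2) = 0, Q(α_1,α_2) = 1. -/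
/-- Let `g = Ref_{H-E₁-E₂-E₇} ∘ Ref_{H-E₃-E₄-E₇} ∘ Ref_{H-E₅-E₆-E₇}` on
`(ℤ^8, Q)` of signature `(1,7)`, where `Ref_v(w) = w + Q(v,w)·v` for a root `v` with
`Q(v,v) = -2`. Then `g` fixes both `α₁ = 2H-E₁-E₃-E₅-E₇` and `α₂ = H-E₇`, and
`Q(α₁,α₁) = 0`, `Q(α₂,α₂) = 0`, `Q(α₁,α₂) = 1`. -/
theorem stmt_7
    (Q : (Fin 8 → ℤ) → (Fin 8 → ℤ) → ℤ)
    (hQ : ∀ x y, Q x y = ∑ i : Fin 8, (if (i : ℕ) = 0 then 1 else -1) * x i * y i)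
    (Ref : (Fin 8 → ℤ) → (Fin 8 → ℤ) → (Fin 8 → ℤ))
    (hRef : ∀ v w, Ref v w = w + Q v w • v)
    (g : (Fin 8 → ℤ) → (Fin 8 → ℤ))
    (hg : ∀ w, g w = Ref ![1,-1,-1,0,0,0,0,-1]
        (Ref ![1,0,0,-1,-1,0,0,-1] (Ref ![1,0,0,0,0,-1,-1,-1] w)))
    (α₁ α₂ : Fin 8 → ℤ)
    (hα₁ : α₁ = ![2,-1,0,-1,0,-1,0,-1])
    (hα₂ : α₂ = ![1,0,0,0,0,0,0,-1]) :
    g α₁ = α₁ ∧ g α₂ = α₂ ∧ Q α₁ α₁ = 0 ∧ Q α₂ α₂ = 0 ∧ Q α₁ α₂ = 1 := by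
  have fix : ∀ v w, Q v w = 0 → Ref v w = w := by
    intro v w h
    rw [hRef, h]; simp
  have h1 : g α₁ = α₁ := by
    rw [hg, hα₁,
        fix ![1,0,0,0,0,-1,-1,-1] ![2,-1,0,-1,0,-1,0,-1] (by rw [hQ]; decide),
        fix ![1,0,0,-1,-1,0,0,-1] ![2,-1,0,-1,0,-1,0,-1] (by rw [hQ]; decide),
        fix ![1,-1,-1,0,0,0,0,-1] ![2,-1,0,-1,0,-1,0,-1] (by rw [hQ]; decide)]
  have h2 : g α₂ = α₂ := by
    rw [hg, hα₂,
        fix ![1,0,0,0,0,-1,-1,-1] ![1,0,0,0,0,0,0,-1] (by rw [hQ]; decide),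
        fix ![1,0,0,-1,-1,0,0,-1] ![1,0,0,0,0,0,0,-1] (by rw [hQ]; decide),
        fix ![1,-1,-1,0,0,0,0,-1] ![1,0,0,0,0,0,0,-1] (by rw [hQ]; decide)]
  refine ⟨h1, h2, ?_, ?_, ?_⟩ <;> subst hα₁ hα₂ <;> rw [hQ] <;> decide
end

section
/- Let h be the isometry of the lattice (Z^8, Q) of signature (1,7) that fixes H and E_7, and swaps E_1 ↔ E_2, E_3 ↔ E_4, E_5 ↔ E_6. The fixed sublattice of h is spanned by H, E_7, E_1+E_2, E_3+E_4, E_5+E_6, and no two elements c_1, c_2 of this fixed sublattice satisfy Q(c_1,c_1) = Q(c_2,c_2) = 0 and Q(c_1,c_2) = 1. -/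
/-- Let `h` be the isometry of `(ℤ^8, Q)` of signature `(1,7)` fixing `H` and
`E₇` and swapping `E₁ ↔ E₂`, `E₃ ↔ E₄`, `E₅ ↔ E₆`. Its fixed sublattice is spanned by
`H, E₇, E₁+E₂, E₃+E₄, E₅+E₆`, and no two elements `c₁, c₂` of this fixed sublattice satisfy
`Q(c₁,c₁) = Q(c₂,c₂) = 0` and `Q(c₁,c₂) = 1`. -/
theorem stmt_8
    (Q : (Fin 8 → ℤ) → (Fin 8 → ℤ) → ℤ)
    (hQ : ∀ x y, Q x y = ∑ i : Fin 8, (if (i : ℕ) = 0 then 1 else -1) * x i * y i)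
    (h : (Fin 8 → ℤ) → (Fin 8 → ℤ))
    (hh : ∀ x, h x = x ∘ ![0, 2, 1, 4, 3, 6, 5, 7]) :
    (∀ x, h x = x ↔ x ∈ Submodule.span ℤ
      ({![1,0,0,0,0,0,0,0], ![0,0,0,0,0,0,0,1], ![0,1,1,0,0,0,0,0],
        ![0,0,0,1,1,0,0,0], ![0,0,0,0,0,1,1,0]} : Set (Fin 8 → ℤ))) ∧
    ¬ ∃ c₁ c₂ : Fin 8 → ℤ, h c₁ = c₁ ∧ h c₂ = c₂ ∧
        Q c₁ c₁ = 0 ∧ Q c₂ c₂ = 0 ∧ Q c₁ c₂ = 1 := by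
  have key : ∀ x : Fin 8 → ℤ, h x = x → x 2 = x 1 ∧ x 4 = x 3 ∧ x 6 = x 5 := by
    intro x hx
    have hx' : x ∘ ![0, 2, 1, 4, 3, 6, 5, 7] = x := by rw [← hh]; exact hx
    refine ⟨?_, ?_, ?_⟩
    · simpa using congrFun hx' 1
    · simpa using congrFun hx' 3
    · simpa using congrFun hx' 5
  constructor
  · intro x
    constructor
    · intro hx
      obtain ⟨h1, h2, h3⟩ := key x hx
      have hrep : x = x 0 • ![1,0,0,0,0,0,0,0] + x 7 • ![0,0,0,0,0,0,0,1]
          + x 1 • ![0,1,1,0,0,0,0,0] + x 3 • ![0,0,0,1,1,0,0,0]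
          + x 5 • ![0,0,0,0,0,1,1,0] := by
        funext i
        fin_cases i <;> simp only [Pi.add_apply, Pi.smul_apply, smul_eq_mul] <;>
          norm_num <;> first | rfl | exact h1 | exact h2 | exact h3
      rw [hrep]
      refine Submodule.add_mem _ (Submodule.add_mem _ (Submodule.add_mem _ (Submodule.add_mem _ ?_ ?_) ?_) ?_) ?_ <;>
        exact Submodule.smul_mem _ _ (Submodule.subset_span (by simp))
    · intro hx
      induction hx using Submodule.span_induction with
      | mem g hg =>
        rcases hg with rfl | rfl | rfl | rfl | rfl <;>
          · rw [hh]; funext i; fin_cases i <;> rfl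
      | zero => rw [hh]; funext i; rfl
      | add a b _ _ ha hb =>
        rw [hh] at ha hb ⊢; funext i
        have h1 := congrFun ha i; have h2 := congrFun hb i
        simp only [Function.comp_apply, Pi.add_apply] at h1 h2 ⊢
        omega
      | smul r a _ ha =>
        rw [hh] at ha ⊢; funext i
        show r * a (![0, 2, 1, 4, 3, 6, 5, 7] i) = r * a i
        rw [show a (![0, 2, 1, 4, 3, 6, 5, 7] i) = a i from congrFun ha i]
  · rintro ⟨c₁, c₂, h1, h2, q1, q2, q12⟩
    obtain ⟨a1, a2, a3⟩ := key c₁ h1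
    obtain ⟨b1, b2, b3⟩ := key c₂ h2
    rw [hQ, Fin.sum_univ_eight] at q1 q2 q12
    simp only [show ((0:Fin 8):ℕ)=0 from rfl, show ((1:Fin 8):ℕ)=1 from rfl,
      show ((2:Fin 8):ℕ)=2 from rfl, show ((3:Fin 8):ℕ)=3 from rfl,
      show ((4:Fin 8):ℕ)=4 from rfl, show ((5:Fin 8):ℕ)=5 from rfl,
      show ((6:Fin 8):ℕ)=6 from rfl, show ((7:Fin 8):ℕ)=7 from rfl] at q1 q2 q12
    norm_num at q1 q2 q12
    rw [a1, a2, a3] at q1 q12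
    rw [b1, b2, b3] at q2 q12
    have ea : Even (c₁ 0) ↔ Even (c₁ 7) := by
      have : Even (c₁ 0 * c₁ 0 - c₁ 7 * c₁ 7) :=
        ⟨c₁ 1 * c₁ 1 + c₁ 3 * c₁ 3 + c₁ 5 * c₁ 5, by linarith⟩
      have := Int.even_sub.mp this
      simp [Int.even_mul] at this
      tauto
    have eb : Even (c₂ 0) ↔ Even (c₂ 7) := by
      have : Even (c₂ 0 * c₂ 0 - c₂ 7 * c₂ 7) :=
        ⟨c₂ 1 * c₂ 1 + c₂ 3 * c₂ 3 + c₂ 5 * c₂ 5, by linarith⟩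
      have := Int.even_sub.mp this
      simp [Int.even_mul] at this
      tauto
    have eq12 : Even (c₁ 0 * c₂ 0 - c₁ 7 * c₂ 7) := by
      rw [Int.even_sub]
      simp [Int.even_mul]
      tauto
    obtain ⟨k, hk⟩ := eq12
    omega
end

section
/- The two order-2 isometries h_1 = Ref_{H-E_1-E_2-E_7} ∘ Ref_{H-E_3-E_4-E_7} ∘ Ref_{H-E_5-E_6-E_7} and h_2 = Ref_{E_1-E_2} ∘ Ref_{E_3-E_4} ∘ Ref_{E_5-E_6} of the lattice (Z^8, Q) of signature (1,7) are not conjugate in the full isometry group O(1,7)(Z) of the lattice. -/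
/-!
If `a, b, c` are pairwise orthogonal, the product `h` of the three reflections satisfies
`Q(x, h x) = Q(x, x) + Q(a, x)² + Q(b, x)² + Q(c, x)²`. Modulo 2 the form `Q` is the dot product,
so `Q(x, h x) ≡ Q(w + a + b + c, x)` with `w = (1, …, 1)`. For `h₁` the roots add up to `w` modulo 2,
hence `Q(x, h₁ x)` is always even, whereas `Q(H, h₂ H) = Q(H, H) = 1`. Since `x ↦ Q(x, h x)` is
transported by any isometry conjugating the two involutions, they cannot be conjugate.
-/

open Matrix

section Reflection

variable {R M : Type*} [CommRing R] [AddCommGroup M] [Module R M] (B : LinearMap.BilinForm R M)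

def reflect (v w : M) : M := w + B v w • v

variable {B} {a b c : M}

theorem reflect_reflect_reflect (hab : B a b = 0) (hac : B a c = 0) (hbc : B b c = 0) (x : M) :
    reflect B a (reflect B b (reflect B c x)) = x + B c x • c + B b x • b + B a x • a := by
  simp [reflect, hab, hac, hbc]

theorem apply_reflect_reflect_reflect (hB : B.IsSymm) (hab : B a b = 0) (hac : B a c = 0)
    (hbc : B b c = 0) (x : M) :
    B x (reflect B a (reflect B b (reflect B c x))) = B x x + B a x ^ 2 + B b x ^ 2 + B c x ^ 2 := by
  rw [reflect_reflect_reflect hab hac hbc]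
  simp only [map_add, map_smul, LinearMap.add_apply, LinearMap.smul_apply, smul_eq_mul, hB.eq x]
  ring

end Reflection

section LorentzForm

def lorentzForm (n : ℕ) : LinearMap.BilinForm ℤ (Fin (n + 1) → ℤ) :=
  toLinearMap₂' ℤ (diagonal fun i => if (i : ℕ) = 0 then 1 else -1)

variable {n : ℕ}

theorem lorentzForm_apply (x y : Fin (n + 1) → ℤ) :
    lorentzForm n x y = ∑ i : Fin (n + 1), (if (i : ℕ) = 0 then 1 else -1) * x i * y i := by
  simp only [lorentzForm, toLinearMap₂'_apply', dotProduct, mulVec_diagonal]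
  exact Finset.sum_congr rfl fun i _ => by ring

theorem lorentzForm_isSymm : (lorentzForm n).IsSymm :=
  ⟨fun x y => by simp only [lorentzForm_apply, mul_right_comm _ (x _)]⟩

theorem intCast_lorentzForm (x y : Fin (n + 1) → ℤ) :
    ((lorentzForm n x y : ℤ) : ZMod 2) = ∑ i, (x i : ZMod 2) * y i := by
  rw [lorentzForm_apply]
  push_cast
  refine Finset.sum_congr rfl fun i _ => ?_
  split_ifs <;> simp [CharTwo.neg_eq]

theorem even_lorentzForm_self_add_sq {a b c : Fin (n + 1) → ℤ}
    (habc : ∀ i, ((a i + b i + c i : ℤ) : ZMod 2) = 1) (x : Fin (n + 1) → ℤ) :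
    Even (lorentzForm n x x + lorentzForm n a x ^ 2 + lorentzForm n b x ^ 2
      + lorentzForm n c x ^ 2) := by
  rw [← ZMod.intCast_eq_zero_iff_even]
  push_cast
  simp only [ZMod.pow_card, intCast_lorentzForm, ← Finset.sum_add_distrib]
  refine Finset.sum_eq_zero fun i _ => ?_
  have hi := habc i
  push_cast at hi
  calc (x i : ZMod 2) * x i + a i * x i + b i * x i + c i * x i
      = x i ^ 2 + (a i + b i + c i) * x i := by ring
    _ = x i + x i := by rw [hi, ZMod.pow_card, one_mul]
    _ = 0 := CharTwo.add_self_eq_zero _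

end LorentzForm

/-- The order-2 isometries
`h₁ = Ref_{H-E₁-E₂-E₇} ∘ Ref_{H-E₃-E₄-E₇} ∘ Ref_{H-E₅-E₆-E₇}` and
`h₂ = Ref_{E₁-E₂} ∘ Ref_{E₃-E₄} ∘ Ref_{E₅-E₆}` of `(ℤ^8, Q)` of signature `(1,7)` are
not conjugate in the full isometry group `O(1,7)(ℤ)` of the lattice. -/
theorem stmt_9
    (Q : (Fin 8 → ℤ) → (Fin 8 → ℤ) → ℤ)
    (hQ : ∀ x y, Q x y = ∑ i : Fin 8, (if (i : ℕ) = 0 then 1 else -1) * x i * y i)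
    (Ref : (Fin 8 → ℤ) → (Fin 8 → ℤ) → (Fin 8 → ℤ))
    (hRef : ∀ v w, Ref v w = w + Q v w • v)
    (h₁ h₂ : (Fin 8 → ℤ) → (Fin 8 → ℤ))
    (hh₁ : ∀ w, h₁ w = Ref ![1,-1,-1,0,0,0,0,-1]
        (Ref ![1,0,0,-1,-1,0,0,-1] (Ref ![1,0,0,0,0,-1,-1,-1] w)))
    (hh₂ : ∀ w, h₂ w = Ref ![0,1,-1,0,0,0,0,0]
        (Ref ![0,0,0,1,-1,0,0,0] (Ref ![0,0,0,0,0,1,-1,0] w))) :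
    ¬ ∃ Φ : (Fin 8 → ℤ) ≃ₗ[ℤ] (Fin 8 → ℤ),
        (∀ x y, Q (Φ x) (Φ y) = Q x y) ∧ ∀ x, h₁ x = Φ.symm (h₂ (Φ x)) := by
  rintro ⟨Φ, hΦ, hconj⟩
  obtain rfl : Q = fun x y => lorentzForm 7 x y := by ext x y; rw [hQ, lorentzForm_apply]
  obtain rfl : Ref = reflect (lorentzForm 7) := by ext v w : 2; rw [hRef, reflect]
  have heven (x) : Even (lorentzForm 7 x (h₁ x)) := by
    rw [hh₁, apply_reflect_reflect_reflect lorentzForm_isSymm (by decide) (by decide) (by decide)]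
    exact even_lorentzForm_self_add_sq (by decide) x
  set e₀ : Fin 8 → ℤ := Pi.single 0 1
  have hodd : lorentzForm 7 e₀ (h₂ e₀) = 1 := by
    rw [hh₂, apply_reflect_reflect_reflect lorentzForm_isSymm (by decide) (by decide) (by decide)]
    decide
  beta_reduce at hΦ
  have hinv : lorentzForm 7 (Φ.symm e₀) (h₁ (Φ.symm e₀)) = 1 := by
    rw [← hΦ, hconj, Φ.apply_symm_apply, Φ.apply_symm_apply, hodd]
  exact absurd (hinv ▸ heven (Φ.symm e₀)) (by decide)
end

section
/- Let n >= 5 be odd, and let g be an isometry of the lattice L = Z{S_1, S_2, e_1, ..., e_{n-1}} (with Q(S_1,S_1)=Q(S_2,S_2)=0, Q(S_1,S_2)=1, Q(S_i,e_k)=0, Q(e_k,e_l)=-δ_{kl}) satisfying g(S_2)=S_2 and g(e_k)=S_2-e_k for all k. Then there is no c in L with Q(c,c) = -1 and g(c) = -c. -/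
/-- Let `n ≥ 5` be odd and let `L = ℤ{S₁, S₂, e₁, …, e_{n-1}}` with
`Q(S₁,S₂) = 1`, `Q(Sᵢ,Sᵢ) = 0`, `Q(eₖ,eₗ) = -δₖₗ`, `Q(Sᵢ,eₖ) = 0` (coordinates:
index 0 ↦ S₁, index 1 ↦ S₂, index k+1 ↦ eₖ). Let `g` be the isometry with
`g(S₁) = S₁ + ((n-1)/2)S₂ - e₁ - ⋯ - e_{n-1}`, `g(S₂) = S₂`, `g(eₖ) = S₂ - eₖ`
(the homological action of a de Jonquières involution). Then there is no `c ∈ L` with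
`Q(c,c) = -1` and `g(c) = -c`. -/
theorem stmt_12 (n : ℕ) (hn : 5 ≤ n) (hodd : Odd n)
    (Q : (Fin (n+1) → ℤ) → (Fin (n+1) → ℤ) → ℤ)
    (hQ : ∀ x y, Q x y = x 0 * y 1 + x 1 * y 0 -
        ∑ i : Fin (n+1), (if 2 ≤ (i : ℕ) then x i * y i else 0))
    (S₁ S₂ : Fin (n+1) → ℤ)
    (hS₁ : S₁ = fun i : Fin (n+1) => if (i : ℕ) = 0 then 1 else 0)
    (hS₂ : S₂ = fun i : Fin (n+1) => if (i : ℕ) = 1 then 1 else 0)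
    (e : ℕ → (Fin (n+1) → ℤ))
    (he : ∀ k, e k = fun i : Fin (n+1) => if (i : ℕ) = k + 1 then 1 else 0)
    (g : (Fin (n+1) → ℤ) ≃ₗ[ℤ] (Fin (n+1) → ℤ))
    (hgQ : ∀ x y, Q (g x) (g y) = Q x y)
    (hgS₁ : g S₁ = S₁ + (((n-1)/2 : ℕ) : ℤ) • S₂ - ∑ k ∈ Finset.Icc 1 (n-1), e k)
    (hgS₂ : g S₂ = S₂)
    (hge : ∀ k, 1 ≤ k → k ≤ n-1 → g (e k) = S₂ - e k) :
    ¬ ∃ c : Fin (n+1) → ℤ, Q c c = -1 ∧ g c = -c := by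
  rintro ⟨c, hQc, hgc⟩
  have h1val : ((1 : Fin (n+1)) : ℕ) = 1 := by
    rw [Fin.val_one']; exact Nat.mod_eq_of_lt (by omega)
  have h0val : ((0 : Fin (n+1)) : ℕ) = 0 := rfl
  -- helper: sums against S₁, S₂ over indices ≥ 2 vanish
  have hsumS₂ : ∀ x : Fin (n+1) → ℤ,
      (∑ i : Fin (n+1), if 2 ≤ (i:ℕ) then x i * S₂ i else 0) = 0 := by
    intro x
    apply Finset.sum_eq_zero
    intro i _
    simp only [hS₂]
    split_ifs with h1 h2
    · omega
    · ring
    · rfl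
  have hsumS₁ : ∀ x : Fin (n+1) → ℤ,
      (∑ i : Fin (n+1), if 2 ≤ (i:ℕ) then x i * S₁ i else 0) = 0 := by
    intro x
    apply Finset.sum_eq_zero
    intro i _
    simp only [hS₁]
    split_ifs with h1 h2
    · omega
    · ring
    · rfl
  -- c 0 = 0
  have hc0 : c 0 = 0 := by
    have h := hgQ c S₂
    rw [hgc, hgS₂, hQ, hQ, hsumS₂, hsumS₂] at h
    simp only [hS₂, Pi.neg_apply, h0val, h1val] at h
    simp at h
    linarith
  -- coordinates of g S₁
  have hsumE : ∀ i : Fin (n+1),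
      (∑ k ∈ Finset.Icc 1 (n-1), e k) i
        = if 2 ≤ (i:ℕ) then 1 else 0 := by
    intro i
    rw [Finset.sum_apply]
    split_ifs with h2
    · rw [Finset.sum_eq_single_of_mem ((i:ℕ) - 1)]
      · rw [he]
        simp only []
        rw [if_pos (by omega)]
      · simp only [Finset.mem_Icc]
        have := i.isLt
        omega
      · intro k _ hk
        rw [he]
        simp only []
        rw [if_neg (by omega)]
    · apply Finset.sum_eq_zero
      intro k hk
      simp only [Finset.mem_Icc] at hk
      rw [he]
      simp only []
      rw [if_neg (by omega)]
  have hw : ∀ i : Fin (n+1), (g S₁) i =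
      if (i:ℕ) = 0 then 1 else if (i:ℕ) = 1 then (((n-1)/2 : ℕ) : ℤ) else -1 := by
    intro i
    rw [hgS₁]
    simp only [Pi.sub_apply, Pi.add_apply, Pi.smul_apply, smul_eq_mul, hsumE, hS₁, hS₂]
    have := i.isLt
    split_ifs <;> omega
  -- main relation: ∑_{i≥2} c i = -2 c 1
  have hT : (∑ i : Fin (n+1), if 2 ≤ (i:ℕ) then c i else 0) = -2 * c 1 := by
    have h := hgQ c S₁
    rw [hgc, hQ, hQ, hsumS₁] at h
    have hrw : (∑ i : Fin (n+1), if 2 ≤ (i:ℕ) then (-c) i * (g S₁) i else 0)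
        = ∑ i : Fin (n+1), if 2 ≤ (i:ℕ) then c i else 0 := by
      apply Finset.sum_congr rfl
      intro i _
      rw [hw i]
      simp only [Pi.neg_apply]
      split_ifs with h1 h2 h3
      · omega
      · omega
      · ring
      · rfl
    rw [hrw, hw 0, hw 1] at h
    simp only [hS₁, Pi.neg_apply, h0val, h1val] at h
    norm_num at h
    rw [hc0] at h
    linarith
  -- from Q c c = -1 : ∑_{i≥2} (c i)^2 = 1
  have hTS : (∑ i : Fin (n+1), if 2 ≤ (i:ℕ) then c i * c i else 0) = 1 := by
    rw [hQ, hc0] at hQc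
    linarith
  -- parity contradiction
  have hdvd : (2:ℤ) ∣ ((∑ i : Fin (n+1), if 2 ≤ (i:ℕ) then c i * c i else 0)
      - (∑ i : Fin (n+1), if 2 ≤ (i:ℕ) then c i else 0)) := by
    rw [← Finset.sum_sub_distrib]
    apply Finset.dvd_sum
    intro i _
    split_ifs with h1
    · rcases Int.even_or_odd (c i) with ⟨k, hk⟩ | ⟨k, hk⟩
      · exact ⟨2*k*k - k, by rw [hk]; ring⟩
      · exact ⟨2*k*k + k, by rw [hk]; ring⟩
    · simp
  rw [hTS, hT] at hdvd
  omega
end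

section
/- With L and g as in the de Jonquières setting (g(S_2)=S_2, g(e_k)=S_2-e_k for k=1,...,n-1, g(S_1)=S_1+((n-1)/2)S_2-e_1-...-e_{n-1}, n odd), the fixed sublattice L^g equals the span of S_2 and 2S_1 - e_1 - ... - e_{n-1}. -/
/-!
In a coordinate `j` off `S₁, S₂` one reads off `(g x)_j = -x_{S₁} - x_j`, so a fixed vector has all
these coordinates equal to `-x_{S₁} / 2`, which forces `x = x_{S₂} S₂ - x_j (2 S₁ - ∑ e_k)`.
Conversely `S₂` is fixed, and so is `2 S₁ - ∑ e_k` because there are exactly `2m = n - 1` vectors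
`e_k`, each sent to `S₂ - e_k`.
-/

open Finset

namespace DeJonquieres

variable {ι : Type*} [Fintype ι] [DecidableEq ι]

def sumSingleCompl (i₀ i₁ : ι) : ι → ℤ := ∑ i ∈ ({i₀, i₁}ᶜ : Finset ι), Pi.single i 1

lemma sumSingleCompl_apply (i₀ i₁ j : ι) :
    sumSingleCompl i₀ i₁ j = if j = i₀ ∨ j = i₁ then 0 else 1 := by
  simp only [sumSingleCompl, Finset.sum_apply, sum_pi_single, mem_compl, mem_insert,
    mem_singleton]
  split_ifs <;> simp_all

/-- In the basis `S₁ = single i₀ 1`, `S₂ = single i₁ 1` and `e_k` the remaining `single i 1`, these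
are the formulas `g S₁ = S₁ + m S₂ - ∑ e_k`, `g S₂ = S₂`, `g e_k = S₂ - e_k`. -/
structure IsDeJonquieresAction (g : (ι → ℤ) →ₗ[ℤ] ι → ℤ) (i₀ i₁ : ι) (m : ℕ) : Prop where
  apply_single_left :
    g (Pi.single i₀ 1) = Pi.single i₀ 1 + (m : ℤ) • Pi.single i₁ 1 - sumSingleCompl i₀ i₁
  apply_single_right : g (Pi.single i₁ 1) = Pi.single i₁ 1
  apply_single_of_ne :
    ∀ i, i ≠ i₀ → i ≠ i₁ → g (Pi.single i 1) = Pi.single i₁ 1 - Pi.single i 1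

namespace IsDeJonquieresAction

variable {i₀ i₁ : ι} {m : ℕ} {g : (ι → ℤ) →ₗ[ℤ] ι → ℤ}

lemma apply_eq_neg_sub (hg : IsDeJonquieresAction g i₀ i₁ m) (x : ι → ℤ) {j : ι}
    (hj₀ : j ≠ i₀) (hj₁ : j ≠ i₁) :
    g x j = -x i₀ - x j := by
  suffices h : LinearMap.proj j ∘ₗ g =
      -LinearMap.proj (R := ℤ) (φ := fun _ : ι => ℤ) i₀ - LinearMap.proj j by
    simpa using LinearMap.congr_fun h x
  ext i
  simp only [LinearMap.coe_comp, Function.comp_apply, LinearMap.coe_single, LinearMap.coe_proj,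
    Function.eval, LinearMap.sub_apply, LinearMap.neg_apply]
  by_cases hi₀ : i = i₀
  · subst hi₀
    simp [hg.apply_single_left, sumSingleCompl_apply, hj₀, hj₁]
  by_cases hi₁ : i = i₁
  · subst hi₁
    simp [hg.apply_single_right, hj₁, hi₀]
  · simp [hg.apply_single_of_ne i hi₀ hi₁, hj₁, Pi.single_apply, Ne.symm hi₀]

lemma apply_sumSingleCompl (hg : IsDeJonquieresAction g i₀ i₁ m) :
    g (sumSingleCompl i₀ i₁) =
      #({i₀, i₁}ᶜ : Finset ι) • Pi.single i₁ 1 - sumSingleCompl i₀ i₁ := by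
  rw [sumSingleCompl, map_sum, ← sum_const, ← sum_sub_distrib]
  refine sum_congr rfl fun i hi => ?_
  simp only [mem_compl, mem_insert, mem_singleton, not_or] at hi
  exact hg.apply_single_of_ne i hi.1 hi.2

lemma apply_two_smul_single_sub_sumSingleCompl (hg : IsDeJonquieresAction g i₀ i₁ m)
    (hm : #({i₀, i₁}ᶜ : Finset ι) = 2 * m) :
    g ((2 : ℤ) • Pi.single i₀ 1 - sumSingleCompl i₀ i₁) =
      (2 : ℤ) • Pi.single i₀ 1 - sumSingleCompl i₀ i₁ := by
  rw [map_sub, map_smul, hg.apply_single_left, hg.apply_sumSingleCompl, hm]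
  module

theorem apply_eq_self_iff_mem_span (hg : IsDeJonquieresAction g i₀ i₁ m) (h₀₁ : i₀ ≠ i₁)
    (hm : #({i₀, i₁}ᶜ : Finset ι) = 2 * m) {j : ι} (hj₀ : j ≠ i₀) (hj₁ : j ≠ i₁) (x : ι → ℤ) :
    g x = x ↔ x ∈ Submodule.span ℤ
      {Pi.single i₁ 1, (2 : ℤ) • Pi.single i₀ 1 - sumSingleCompl i₀ i₁} := by
  rw [Submodule.mem_span_pair]
  constructor
  · intro hx
    have hcoord : ∀ k, k ≠ i₀ → k ≠ i₁ → 2 * x k = -x i₀ := fun k hk₀ hk₁ => by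
      have := hg.apply_eq_neg_sub x hk₀ hk₁
      rw [hx] at this
      linarith
    have hj := hcoord j hj₀ hj₁
    refine ⟨x i₁, -x j, funext fun k => ?_⟩
    by_cases hk₀ : k = i₀
    · subst hk₀
      simp [sumSingleCompl_apply, h₀₁.symm]
      linarith
    by_cases hk₁ : k = i₁
    · subst hk₁
      simp [sumSingleCompl_apply, hk₀]
    · simp [sumSingleCompl_apply, hk₀, hk₁]
      linarith [hcoord k hk₀ hk₁]
  · rintro ⟨a, b, rfl⟩
    rw [map_add, map_smul, map_smul, hg.apply_single_right,
      hg.apply_two_smul_single_sub_sumSingleCompl hm]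

end IsDeJonquieresAction

lemma ite_val_eq_eq_single {N : ℕ} (i : Fin N) (k : ℕ) (hk : (i : ℕ) = k) :
    (fun l : Fin N => if (l : ℕ) = k then (1 : ℤ) else 0) = Pi.single i 1 := by
  subst hk
  funext l
  simp [Pi.single_apply, Fin.ext_iff]

lemma mem_compl_zero_one_iff {n : ℕ} (l : Fin (n + 1)) :
    l ∈ ({0, 1}ᶜ : Finset (Fin (n + 1))) ↔ 2 ≤ (l : ℕ) := by
  rcases n with _ | n
  · simp [Fin.fin_one_eq_zero l]
  · simp only [mem_compl, mem_insert, mem_singleton, not_or, Fin.ext_iff, Fin.val_zero,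
      Fin.val_one]
    omega

lemma sum_Icc_ite_val_eq_sumSingleCompl (n : ℕ) :
    ∑ k ∈ Icc 1 (n - 1), (fun l : Fin (n + 1) => if (l : ℕ) = k + 1 then (1 : ℤ) else 0) =
      sumSingleCompl 0 1 := by
  have hval : ∀ k ∈ Icc 1 (n - 1), (Fin.ofNat (n + 1) (k + 1) : ℕ) = k + 1 := fun k hk => by
    rw [mem_Icc] at hk
    rw [Fin.val_ofNat, Nat.mod_eq_of_lt (by omega)]
  refine sum_nbij' (fun k => Fin.ofNat (n + 1) (k + 1)) (fun l => (l : ℕ) - 1)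
    ?_ ?_ ?_ ?_ fun k hk => ite_val_eq_eq_single _ _ ?_
  · intro k hk
    rw [mem_compl_zero_one_iff, hval k hk]
    rw [mem_Icc] at hk
    omega
  · intro l hl
    rw [mem_compl_zero_one_iff] at hl
    rw [mem_Icc]
    omega
  · intro k hk
    rw [hval k hk]
    rfl
  · intro l hl
    rw [mem_compl_zero_one_iff] at hl
    ext
    rw [Fin.val_ofNat, Nat.mod_eq_of_lt (by omega)]
    omega
  · exact hval k hk

end DeJonquieres

open DeJonquieres in
theorem stmt_13_general (n : ℕ) (hn : 5 ≤ n) (hodd : Odd n)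
    (S₁ S₂ : Fin (n+1) → ℤ)
    (hS₁ : S₁ = fun i : Fin (n+1) => if (i : ℕ) = 0 then 1 else 0)
    (hS₂ : S₂ = fun i : Fin (n+1) => if (i : ℕ) = 1 then 1 else 0)
    (e : ℕ → (Fin (n+1) → ℤ))
    (he : ∀ k, e k = fun i : Fin (n+1) => if (i : ℕ) = k + 1 then 1 else 0)
    (g : (Fin (n+1) → ℤ) ≃ₗ[ℤ] (Fin (n+1) → ℤ))
    (hgS₁ : g S₁ = S₁ + (((n-1)/2 : ℕ) : ℤ) • S₂ - ∑ k ∈ Finset.Icc 1 (n-1), e k)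
    (hgS₂ : g S₂ = S₂)
    (hge : ∀ k, 1 ≤ k → k ≤ n-1 → g (e k) = S₂ - e k) :
    ∀ x : Fin (n+1) → ℤ, g x = x ↔
      x ∈ Submodule.span ℤ
        ({S₂, (2 : ℤ) • S₁ - ∑ k ∈ Finset.Icc 1 (n-1), e k} : Set (Fin (n+1) → ℤ)) := by
  have h₁ : ((1 : Fin (n + 1)) : ℕ) = 1 := (Fin.val_one' _).trans (Nat.mod_eq_of_lt (by omega))
  have h₀₁ : (0 : Fin (n + 1)) ≠ 1 := Fin.ne_of_val_ne (by rw [h₁]; simp)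
  rw [ite_val_eq_eq_single 0 0 rfl] at hS₁
  rw [ite_val_eq_eq_single 1 1 h₁] at hS₂
  subst hS₁ hS₂
  have hM : ∑ k ∈ Icc 1 (n - 1), e k = sumSingleCompl 0 1 := by
    simp only [he]
    exact sum_Icc_ite_val_eq_sumSingleCompl n
  have hcard : #({0, 1}ᶜ : Finset (Fin (n + 1))) = 2 * ((n - 1) / 2) := by
    obtain ⟨m, rfl⟩ := hodd
    rw [card_compl, card_pair h₀₁, Fintype.card_fin]
    omega
  rw [hM] at hgS₁ ⊢
  have hg : IsDeJonquieresAction g.toLinearMap 0 1 ((n - 1) / 2) := by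
    refine ⟨hgS₁, hgS₂, fun i hi₀ hi₁ => ?_⟩
    have hi : 2 ≤ (i : ℕ) := (mem_compl_zero_one_iff i).1 (by simp [hi₀, hi₁])
    have he_i : e (i - 1) = Pi.single i 1 := (he _).trans (ite_val_eq_eq_single i _ (by omega))
    simpa [he_i] using hge (i - 1) (by omega) (by omega)
  exact hg.apply_eq_self_iff_mem_span h₀₁ hcard (j := ⟨2, by omega⟩) (Fin.ne_of_val_ne (by simp))
    (Fin.ne_of_val_ne (by rw [h₁]; simp))

/-- In the de Jonquières setting (same lattice and isometry `g` as above,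
`n ≥ 5` odd), the fixed sublattice `L^g` equals the span of `S₂` and
`2S₁ - e₁ - ⋯ - e_{n-1}`. -/
theorem stmt_13 (n : ℕ) (hn : 5 ≤ n) (hodd : Odd n)
    (Q : (Fin (n+1) → ℤ) → (Fin (n+1) → ℤ) → ℤ)
    (hQ : ∀ x y, Q x y = x 0 * y 1 + x 1 * y 0 -
        ∑ i : Fin (n+1), (if 2 ≤ (i : ℕ) then x i * y i else 0))
    (S₁ S₂ : Fin (n+1) → ℤ)
    (hS₁ : S₁ = fun i : Fin (n+1) => if (i : ℕ) = 0 then 1 else 0)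
    (hS₂ : S₂ = fun i : Fin (n+1) => if (i : ℕ) = 1 then 1 else 0)
    (e : ℕ → (Fin (n+1) → ℤ))
    (he : ∀ k, e k = fun i : Fin (n+1) => if (i : ℕ) = k + 1 then 1 else 0)
    (g : (Fin (n+1) → ℤ) ≃ₗ[ℤ] (Fin (n+1) → ℤ))
    (hgQ : ∀ x y, Q (g x) (g y) = Q x y)
    (hgS₁ : g S₁ = S₁ + (((n-1)/2 : ℕ) : ℤ) • S₂ - ∑ k ∈ Finset.Icc 1 (n-1), e k)
    (hgS₂ : g S₂ = S₂)
    (hge : ∀ k, 1 ≤ k → k ≤ n-1 → g (e k) = S₂ - e k) :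
    ∀ x : Fin (n+1) → ℤ, g x = x ↔
      x ∈ Submodule.span ℤ
        ({S₂, (2 : ℤ) • S₁ - ∑ k ∈ Finset.Icc 1 (n-1), e k} : Set (Fin (n+1) → ℤ)) :=
  stmt_13_general n hn hodd S₁ S₂ hS₁ hS₂ e he g hgS₁ hgS₂ hge
end

section
/- In the de Jonquières setting with n odd, there do not exist c_1, c_2 in L with Q(c_i,c_j) = -δ_{ij} and g(c_1) = c_2. (Key step: any x with g(x) = -x and Q(x,x) = -2 lies in the span of S_2, e_1, ..., e_{n-1}, and x + y is never in 2L for y in the fixed sublattice Z{S_2, 2S_1 - e_1 - ... - e_{n-1}}.) -/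
/-!
Anti-invariant vectors `x` have `x₀ = 0` (the `S₁`-coordinate is preserved), so they lie in the
span of `S₂, e₁, …, e_{n-1}` and `Q(x, x) = -∑ xᵢ²`. Invariant vectors `y` satisfy `2yᵢ = -y₀`
for `i ≥ 2`, so they lie in `ℤ{S₂, 2S₁ - ∑ eₖ}`, whose vectors have all `e`-coordinates equal.
If `x + y ∈ 2L`, the `n - 1 ≥ 3` numbers `xᵢ` thus have the same parity, and their squares
cannot sum to `2`. Finally, since `2 · (n - 1)/2 = n - 1`, `g` is an involution, so a pair
`c₁, c₂` with `g c₁ = c₂` would give the anti-invariant `c₁ - c₂` of square `-2` and the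
invariant `c₁ + c₂` with sum `2c₁`.
-/

open Finset

theorem Int.card_le_two_of_modEq_of_sum_sq_eq_two {ι : Type*} {s : Finset ι} {f : ι → ℤ} {b : ℤ}
    (hf : ∀ i ∈ s, f i ≡ b [ZMOD 2]) (hs : ∑ i ∈ s, f i ^ 2 = 2) : #s ≤ 2 := by
  rcases Int.even_or_odd b with hb | hb
  · have h4 : (4 : ℤ) ∣ ∑ i ∈ s, f i ^ 2 := dvd_sum fun i hi => by
      obtain ⟨c, hc⟩ : Even (f i) := by rw [Int.even_iff, hf i hi, ← Int.even_iff]; exact hb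
      exact ⟨c ^ 2, by rw [hc]; ring⟩
    omega
  · have h1 : ∀ i ∈ s, 1 ≤ f i ^ 2 := fun i hi => by
      have hodd : f i % 2 = 1 := by rw [hf i hi, ← Int.odd_iff]; exact hb
      rw [one_le_sq_iff_one_le_abs]
      exact Int.one_le_abs (by rintro h; simp [h] at hodd)
    have := card_nsmul_le_sum s _ 1 h1
    rw [hs, nsmul_one] at this
    exact_mod_cast this

theorem LinearMap.BilinForm.IsOrthogonal.not_exists_swapped_pair {R M : Type*} [CommRing R]
    [AddCommGroup M] [Module R M] {B : LinearMap.BilinForm R M} {g : Module.End R M}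
    (hB : B.IsOrthogonal g) (hg : g * g = 1) {F : Submodule R M} (hF : ∀ y, g y = y → y ∈ F)
    (h : ∀ x y, g x = -x → B x x = -2 → y ∈ F → ¬ ∃ z, x + y = (2 : R) • z) :
    ¬ ∃ c₁ c₂, B c₁ c₁ = -1 ∧ B c₂ c₂ = -1 ∧ B c₁ c₂ = 0 ∧ g c₁ = c₂ := by
  rintro ⟨c₁, c₂, h₁₁, h₂₂, h₁₂, rfl⟩
  have hgg : g (g c₁) = c₁ := LinearMap.congr_fun hg c₁
  have h₂₁ : B (g c₁) c₁ = 0 := by rw [← hB, hgg, h₁₂]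
  refine h (c₁ - g c₁) (c₁ + g c₁) (by simp [hgg]) ?_ (hF _ (by simp [hgg, add_comm]))
    ⟨c₁, by module⟩
  simp only [map_sub, LinearMap.sub_apply, h₁₁, h₂₂, h₁₂, h₂₁]
  ring

namespace DeJonquieres

/-- `basisVec n 0 = S₁`, `basisVec n 1 = S₂` and `basisVec n (k + 1) = eₖ`. -/
def basisVec (n k : ℕ) : Fin (n + 1) → ℤ := fun i => if (i : ℕ) = k then 1 else 0

def form (n : ℕ) : LinearMap.BilinForm ℤ (Fin (n + 1) → ℤ) :=
  LinearMap.mk₂ ℤ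
    (fun x y => x 0 * y 1 + x 1 * y 0 - ∑ i : Fin (n + 1) with 2 ≤ i.val, x i * y i)
    (fun x x' y => by simp only [Pi.add_apply, add_mul, sum_add_distrib]; ring)
    (fun c x y => by simp only [Pi.smul_apply, smul_eq_mul, mul_assoc, ← mul_sum]; ring)
    (fun x y y' => by simp only [Pi.add_apply, mul_add, sum_add_distrib]; ring)
    (fun c x y => by simp only [Pi.smul_apply, smul_eq_mul, mul_left_comm _ c, ← mul_sum]; ring)

structure IsDeJonquieres (n : ℕ) (g : Module.End ℤ (Fin (n + 1) → ℤ)) : Prop where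
  map_basisVec_zero : g (basisVec n 0) = basisVec n 0 + (((n - 1) / 2 : ℕ) : ℤ) • basisVec n 1 -
    ∑ k ∈ Icc 1 (n - 1), basisVec n (k + 1)
  map_basisVec_one : g (basisVec n 1) = basisVec n 1
  map_basisVec_succ :
    ∀ k, 1 ≤ k → k ≤ n - 1 → g (basisVec n (k + 1)) = basisVec n 1 - basisVec n (k + 1)

variable {n : ℕ}

theorem form_apply (x y : Fin (n + 1) → ℤ) :
    form n x y = x 0 * y 1 + x 1 * y 0 - ∑ i : Fin (n + 1) with 2 ≤ i.val, x i * y i := rfl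

theorem basisVec_apply (k : ℕ) (i : Fin (n + 1)) :
    basisVec n k i = if (i : ℕ) = k then 1 else 0 := rfl

theorem basisVec_val (i : Fin (n + 1)) : basisVec n i = Pi.single i 1 := by
  ext j
  simp [basisVec, Pi.single_apply, Fin.val_inj]

theorem sum_basisVec_apply (i : Fin (n + 1)) :
    (∑ k ∈ Icc 1 (n - 1), basisVec n (k + 1)) i = if 2 ≤ (i : ℕ) then 1 else 0 := by
  have hi := i.isLt
  have hcond : ∀ k ∈ Icc 1 (n - 1), ((i : ℕ) = k + 1 ↔ (i : ℕ) - 1 = k) := by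
    intro k hk
    rw [mem_Icc] at hk
    omega
  simp only [Finset.sum_apply, basisVec]
  rw [sum_congr rfl fun k hk => if_congr (hcond k hk) rfl rfl, sum_ite_eq]
  simp only [mem_Icc]
  split_ifs <;> omega

theorem linearMap_ext {M : Type*} [AddCommGroup M] [Module ℤ M]
    {f₁ f₂ : (Fin (n + 1) → ℤ) →ₗ[ℤ] M}
    (h₀ : f₁ (basisVec n 0) = f₂ (basisVec n 0)) (h₁ : f₁ (basisVec n 1) = f₂ (basisVec n 1))
    (h : ∀ k, 1 ≤ k → k ≤ n - 1 → f₁ (basisVec n (k + 1)) = f₂ (basisVec n (k + 1))) :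
    f₁ = f₂ := by
  refine (Pi.basisFun ℤ (Fin (n + 1))).ext fun i => ?_
  have hi := i.isLt
  rw [Pi.basisFun_apply, ← basisVec_val]
  obtain hi0 | hi1 | hi2 : (i : ℕ) = 0 ∨ (i : ℕ) = 1 ∨ 2 ≤ (i : ℕ) := by omega
  · rwa [hi0]
  · rwa [hi1]
  · simpa only [Nat.sub_add_cancel (by omega : 1 ≤ (i : ℕ))] using
      h (i - 1) (by omega) (by omega)

theorem mem_span_of_apply_zero_eq_zero {x : Fin (n + 1) → ℤ} (hx : x 0 = 0) :
    x ∈ Submodule.span ℤ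
      ({basisVec n 1} ∪ (fun k => basisVec n (k + 1)) '' Set.Icc 1 (n - 1)) := by
  rw [pi_eq_sum_univ' x]
  refine Submodule.sum_mem _ fun i _ => ?_
  have hi := i.isLt
  rw [← basisVec_val]
  obtain hi0 | hi1 | hi2 : (i : ℕ) = 0 ∨ (i : ℕ) = 1 ∨ 2 ≤ (i : ℕ) := by omega
  · rw [show i = 0 from Fin.ext hi0, hx, zero_smul]
    exact zero_mem _
  · exact Submodule.smul_mem _ _ (Submodule.subset_span (Or.inl (by rw [hi1]; rfl)))
  · exact Submodule.smul_mem _ _ (Submodule.subset_span (Or.inr ⟨i - 1, ⟨by omega, by omega⟩,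
      by simp only [Nat.sub_add_cancel (by omega : 1 ≤ (i : ℕ))]⟩))

theorem not_exists_add_eq_two_smul (hn : 4 ≤ n) {x y : Fin (n + 1) → ℤ} (hx0 : x 0 = 0)
    (hx : form n x x = -2)
    (hy : y ∈ Submodule.span ℤ {basisVec n 1,
      (2 : ℤ) • basisVec n 0 - ∑ k ∈ Icc 1 (n - 1), basisVec n (k + 1)}) :
    ¬ ∃ z, x + y = (2 : ℤ) • z := by
  rintro ⟨z, hz⟩
  obtain ⟨a, b, rfl⟩ := Submodule.mem_span_pair.1 hy
  have hsq : ∑ i : Fin (n + 1) with 2 ≤ i.val, x i ^ 2 = 2 := by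
    rw [form_apply, hx0] at hx
    simp only [sq]
    linarith
  have hpar : ∀ i ∈ ({i | 2 ≤ i.val} : Finset (Fin (n + 1))), x i ≡ b [ZMOD 2] := fun i hi => by
    rw [mem_filter] at hi
    have h := congr_fun hz i
    simp only [Pi.add_apply, Pi.smul_apply, Pi.sub_apply, sum_basisVec_apply, basisVec_apply,
      if_pos hi.2, if_neg (show (i : ℕ) ≠ 0 by omega), if_neg (show (i : ℕ) ≠ 1 by omega),
      smul_eq_mul] at h
    exact Int.modEq_iff_dvd.2 ⟨-z i, by linarith⟩
  have hcard : #({i | 2 ≤ i.val} : Finset (Fin (n + 1))) = n - 1 := by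
    have := card_filter_add_card_filter_not (s := univ) fun i : Fin (n + 1) => 2 ≤ i.val
    simp only [not_le, Fin.card_filter_val_lt, card_univ, Fintype.card_fin] at this
    omega
  have := Int.card_le_two_of_modEq_of_sum_sq_eq_two hpar hsq
  omega

namespace IsDeJonquieres

variable {g : Module.End ℤ (Fin (n + 1) → ℤ)}

theorem apply_zero (hg : IsDeJonquieres n g) (x : Fin (n + 1) → ℤ) : g x 0 = x 0 := by
  refine LinearMap.congr_fun (linearMap_ext (f₁ := LinearMap.proj 0 ∘ₗ g)
    (f₂ := LinearMap.proj 0) ?_ ?_ fun k hk₁ hk₂ => ?_) x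
  on_goal 3 => rw [LinearMap.comp_apply, hg.map_basisVec_succ k hk₁ hk₂]
  all_goals simp only [LinearMap.comp_apply, hg.map_basisVec_zero, hg.map_basisVec_one,
      LinearMap.proj_apply, Pi.add_apply, Pi.sub_apply, Pi.smul_apply, smul_eq_mul,
      sum_basisVec_apply, basisVec_apply, Fin.val_zero]
  all_goals grind

theorem apply_of_two_le (hg : IsDeJonquieres n g) (x : Fin (n + 1) → ℤ) {j : Fin (n + 1)}
    (hj : 2 ≤ (j : ℕ)) : g x j = -x 0 - x j := by
  refine LinearMap.congr_fun (linearMap_ext (f₁ := LinearMap.proj j ∘ₗ g)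
    (f₂ := -LinearMap.proj (R := ℤ) (φ := fun _ => ℤ) 0 - LinearMap.proj j) ?_ ?_
    fun k hk₁ hk₂ => ?_) x
  on_goal 3 => rw [LinearMap.comp_apply, hg.map_basisVec_succ k hk₁ hk₂]
  all_goals simp only [LinearMap.comp_apply, hg.map_basisVec_zero, hg.map_basisVec_one,
      LinearMap.proj_apply, LinearMap.sub_apply, LinearMap.neg_apply, Pi.add_apply,
      Pi.sub_apply, Pi.smul_apply, smul_eq_mul, sum_basisVec_apply, basisVec_apply, Fin.val_zero]
  all_goals grind

theorem apply_zero_eq_zero (hg : IsDeJonquieres n g) {x : Fin (n + 1) → ℤ} (hx : g x = -x) :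
    x 0 = 0 := by
  have h := hg.apply_zero x
  rw [hx, Pi.neg_apply] at h
  omega

theorem mul_self (hg : IsDeJonquieres n g) (hn : Odd n) : g * g = 1 := by
  have hm : ((n - 1 : ℕ) : ℤ) = 2 * (((n - 1) / 2 : ℕ) : ℤ) := by
    obtain ⟨t, rfl⟩ := hn
    omega
  refine linearMap_ext ?_ ?_ fun k hk₁ hk₂ => ?_
  · rw [Module.End.mul_apply, hg.map_basisVec_zero, map_sub, map_add, map_smul, map_sum,
      hg.map_basisVec_zero, hg.map_basisVec_one,
      sum_congr rfl fun k hk => hg.map_basisVec_succ k (mem_Icc.1 hk).1 (mem_Icc.1 hk).2,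
      sum_sub_distrib, sum_const, Nat.card_Icc, Module.End.one_apply, Nat.add_sub_cancel,
      ← Nat.cast_smul_eq_nsmul ℤ, hm]
    module
  · rw [Module.End.mul_apply, hg.map_basisVec_one, hg.map_basisVec_one, Module.End.one_apply]
  · rw [Module.End.mul_apply, hg.map_basisVec_succ k hk₁ hk₂, map_sub, hg.map_basisVec_one,
      hg.map_basisVec_succ k hk₁ hk₂, Module.End.one_apply, sub_sub_cancel]

theorem mem_span_of_apply_eq_self (hg : IsDeJonquieres n g) (hn : 2 ≤ n)
    {y : Fin (n + 1) → ℤ} (hy : g y = y) :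
    y ∈ Submodule.span ℤ {basisVec n 1,
      (2 : ℤ) • basisVec n 0 - ∑ k ∈ Icc 1 (n - 1), basisVec n (k + 1)} := by
  have htail : ∀ j : Fin (n + 1), 2 ≤ (j : ℕ) → 2 * y j = -y 0 := fun j hj => by
    have h := hg.apply_of_two_le y hj
    rw [hy] at h
    omega
  have h₂ := htail ⟨2, by omega⟩ le_rfl
  refine Submodule.mem_span_pair.2 ⟨y 1, -y ⟨2, by omega⟩, funext fun i => ?_⟩
  simp only [Pi.add_apply, Pi.smul_apply, Pi.sub_apply, sum_basisVec_apply, basisVec_apply,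
    smul_eq_mul]
  obtain hi0 | hi1 | hi2 : (i : ℕ) = 0 ∨ (i : ℕ) = 1 ∨ 2 ≤ (i : ℕ) := by omega
  · rw [if_neg (by omega), if_pos hi0, if_neg (by omega)]
    obtain rfl : i = 0 := Fin.ext hi0
    linarith
  · rw [if_pos hi1, if_neg (by omega), if_neg (by omega)]
    obtain rfl : i = 1 := Fin.ext (by rw [hi1, Fin.val_one', Nat.mod_eq_of_lt (by omega)])
    ring
  · rw [if_neg (by omega), if_neg (by omega), if_pos hi2]
    linarith [htail i hi2]

end IsDeJonquieres

end DeJonquieres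

open DeJonquieres in
/-- In the de Jonquières setting (`n ≥ 5` odd), there do not exist `c₁, c₂ ∈ L`
with `Q(cᵢ,cⱼ) = -δᵢⱼ` and `g(c₁) = c₂`. Key steps: any `x` with `g(x) = -x` and
`Q(x,x) = -2` lies in the span of `S₂, e₁, …, e_{n-1}`, and `x + y ∉ 2L` for any such `x`
and any `y` in the fixed sublattice `ℤ{S₂, 2S₁ - e₁ - ⋯ - e_{n-1}}`. -/
theorem stmt_14 (n : ℕ) (hn : 5 ≤ n) (hodd : Odd n)
    (Q : (Fin (n+1) → ℤ) → (Fin (n+1) → ℤ) → ℤ)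
    (hQ : ∀ x y, Q x y = x 0 * y 1 + x 1 * y 0 -
        ∑ i : Fin (n+1), (if 2 ≤ (i : ℕ) then x i * y i else 0))
    (S₁ S₂ : Fin (n+1) → ℤ)
    (hS₁ : S₁ = fun i : Fin (n+1) => if (i : ℕ) = 0 then 1 else 0)
    (hS₂ : S₂ = fun i : Fin (n+1) => if (i : ℕ) = 1 then 1 else 0)
    (e : ℕ → (Fin (n+1) → ℤ))
    (he : ∀ k, e k = fun i : Fin (n+1) => if (i : ℕ) = k + 1 then 1 else 0)
    (g : (Fin (n+1) → ℤ) ≃ₗ[ℤ] (Fin (n+1) → ℤ))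
    (hgQ : ∀ x y, Q (g x) (g y) = Q x y)
    (hgS₁ : g S₁ = S₁ + (((n-1)/2 : ℕ) : ℤ) • S₂ - ∑ k ∈ Finset.Icc 1 (n-1), e k)
    (hgS₂ : g S₂ = S₂)
    (hge : ∀ k, 1 ≤ k → k ≤ n-1 → g (e k) = S₂ - e k) :
    (¬ ∃ c₁ c₂ : Fin (n+1) → ℤ,
        Q c₁ c₁ = -1 ∧ Q c₂ c₂ = -1 ∧ Q c₁ c₂ = 0 ∧ g c₁ = c₂) ∧
    (∀ x : Fin (n+1) → ℤ, g x = -x → Q x x = -2 →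
      x ∈ Submodule.span ℤ ({S₂} ∪ (e '' (Set.Icc 1 (n-1))) : Set (Fin (n+1) → ℤ))) ∧
    (∀ x y : Fin (n+1) → ℤ, g x = -x → Q x x = -2 →
      y ∈ Submodule.span ℤ
        ({S₂, (2 : ℤ) • S₁ - ∑ k ∈ Finset.Icc 1 (n-1), e k} : Set (Fin (n+1) → ℤ)) →
      ¬ ∃ z : Fin (n+1) → ℤ, x + y = (2 : ℤ) • z) := by
  obtain rfl : S₁ = basisVec n 0 := hS₁
  obtain rfl : S₂ = basisVec n 1 := hS₂
  obtain rfl : e = fun k => basisVec n (k + 1) := funext he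
  have hQ_form : ∀ x y, Q x y = form n x y := fun x y => by rw [hQ, form_apply, Finset.sum_filter]
  simp only [hQ_form] at hgQ ⊢
  have hg : IsDeJonquieres n g.toLinearMap := ⟨hgS₁, hgS₂, hge⟩
  have hparity : ∀ x y, g x = -x → form n x x = -2 → _ → ¬ ∃ z, x + y = (2 : ℤ) • z :=
    fun x y hx hxx hy => not_exists_add_eq_two_smul (by omega) (hg.apply_zero_eq_zero hx) hxx hy
  exact ⟨LinearMap.BilinForm.IsOrthogonal.not_exists_swapped_pair hgQ (hg.mul_self hodd)
      (fun y hy => hg.mem_span_of_apply_eq_self (by omega) hy) hparity,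
    fun x hx _ => mem_span_of_apply_zero_eq_zero (hg.apply_zero_eq_zero hx), hparity⟩
end
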